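/- Let i,j,m ∈ {1,...,n+1} be pairwise distinct. Then in 𝒟_{ℂ^n}[s_1,...,s_{n+1}]: l_m s_j Ũ_{i,j} − l_j s_i Ũ_{j,m} = −(l_i l_j U_{i,j} − U_{i,j}(l_j) l_i s_j) Ũ_{j,m} + (l_j l_m U_{j,m} − U_{j,m}(l_m) l_j s_m) Ũ_{i,j} − l_j Ũ_{i,m}. -/

import Mathlib

open MvPolynomial

/-- The ring `ℂ[x₁,…,xₙ,s₁,…,s_{n+1}]`; `Sum.inl i` is `xᵢ`, `Sum.inr j` is `sⱼ`. -/
abbrev P2 (n : ℕ) := MvPolynomial (Fin n ⊕ Fin (n + 1)) ℂ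

/-- The ring `𝒟_{ℂⁿ}[s₁,…,s_{n+1}]` of differential operators with polynomial
coefficients is realized faithfully by its action on `ℂ[x,s]` :
multiplication by a polynomial. -/
noncomputable def M {n : ℕ} (q : P2 n) : Module.End ℂ (P2 n) := LinearMap.mulLeft ℂ q

/-- A linear form on `ℂⁿ` (with coefficient vector `c`) as a polynomial. -/
noncomputable def lfp {n : ℕ} (c : Fin n → ℂ) : P2 n := ∑ m, C (c m) * X (Sum.inl m)

/-- The variable `sⱼ` as a polynomial. -/
noncomputable def sp {n : ℕ} (j : Fin (n + 1)) : P2 n := X (Sum.inr j)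

/-- The constant vector field `u` as a differential operator (a derivation in the
`x`-variables only). -/
noncomputable def Dv {n : ℕ} (u : Fin n → ℂ) : Module.End ℂ (P2 n) :=
  (mkDerivation ℂ (fun v => Sum.casesOn v (fun m => (C (u m) : P2 n)) fun _ => 0) :
    Derivation ℂ (P2 n) (P2 n))

/-- The value `U(l)` of a constant vector field `u` on the linear form with
coefficient vector `c`. -/
noncomputable def ap {n : ℕ} (u c : Fin n → ℂ) : ℂ := ∑ m, u m * c m

/-- A family of linear forms is generic if every subfamily of `n` of them is
linearly independent. -/
def Generic {n p : ℕ} (l : Fin p → Fin n → ℂ) : Prop :=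
  ∀ S : Finset (Fin p), S.card = n → LinearIndependent ℂ (fun i : S => l i.1)

/-- The operator `Ũ_{i,j} = lᵢ lⱼ U_{i,j} − lⱼ sᵢ − U_{i,j}(lⱼ) lᵢ sⱼ`. -/
noncomputable def Ut {n : ℕ} (l : Fin (n + 1) → Fin n → ℂ)
    (u : Fin (n + 1) → Fin (n + 1) → Fin n → ℂ) (i j : Fin (n + 1)) :
    Module.End ℂ (P2 n) :=
  M (lfp (l i)) * M (lfp (l j)) * Dv (u i j) - M (lfp (l j)) * M (sp i) -
    ap (u i j) (l j) • (M (lfp (l i)) * M (sp j))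

/-- The operator `Ẽ = E − s₁ − ⋯ − s_{n+1}`, `E` being the Euler vector field. -/
noncomputable def Et (n : ℕ) : Module.End ℂ (P2 n) :=
  (∑ i : Fin n, M (X (Sum.inl i)) * Dv (Pi.single i 1)) - ∑ k : Fin (n + 1), M (sp k)

/-!
Since `lᵢ lⱼ U_{i,j} − U_{i,j}(lⱼ) lᵢ sⱼ = Ũ_{i,j} + lⱼ sᵢ`, the identity is equivalent to the
commutator formula `[Ũ_{j,m}, Ũ_{i,j}] = lⱼ Ũ_{i,m}`. Genericity gives
`U_{i,m} = U_{i,j} − U_{i,j}(lⱼ) U_{j,m}`, as both sides take the same values on the `n`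
independent forms `l_k`, `k ≠ m`; the commutator is then a Leibniz-rule computation, carried out
by applying both operators to an arbitrary polynomial.
-/

section

variable {n : ℕ}

theorem ap_sub_smul (x y w : Fin n → ℂ) (c : ℂ) : ap (x - c • y) w = ap x w - c * ap y w := by
  simp only [ap, Pi.sub_apply, Pi.smul_apply, smul_eq_mul, sub_mul, mul_assoc,
    Finset.sum_sub_distrib, Finset.mul_sum]

theorem Generic.eq_of_forall_ne_ap_eq {l : Fin (n + 1) → Fin n → ℂ} (hl : Generic l)
    (m : Fin (n + 1)) {v w : Fin n → ℂ} (h : ∀ k ≠ m, ap v (l k) = ap w (l k)) : v = w := by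
  have hcard : ({m}ᶜ : Finset (Fin (n + 1))).card = n := by simp [Finset.card_compl]
  have hspan : Submodule.span ℂ (Set.range fun k : ({m}ᶜ : Finset (Fin (n + 1))) => l k) = ⊤ :=
    (hl _ hcard).span_eq_top_of_card_eq_finrank' (by simp)
  apply (dotProductEquiv ℂ (Fin n)).injective
  exact LinearMap.ext_on_range hspan fun k =>
    h k (Finset.notMem_singleton.1 (Finset.mem_compl.1 k.2))

theorem vectorField_eq_sub_smul {l : Fin (n + 1) → Fin n → ℂ} (hl : Generic l)
    {u : Fin (n + 1) → Fin (n + 1) → Fin n → ℂ}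
    (hu1 : ∀ a b, a ≠ b → ap (u a b) (l a) = 1)
    (hu0 : ∀ a b, a ≠ b → ∀ k, k ≠ a → k ≠ b → ap (u a b) (l k) = 0)
    {i j m : Fin (n + 1)} (hij : i ≠ j) (him : i ≠ m) (hjm : j ≠ m) :
    u i m = u i j - ap (u i j) (l j) • u j m := by
  refine hl.eq_of_forall_ne_ap_eq m fun k hkm => ?_
  rw [ap_sub_smul]
  by_cases hki : k = i
  · subst hki
    rw [hu1 _ _ him, hu1 _ _ hij, hu0 _ _ hjm _ hij him, mul_zero, sub_zero]
  by_cases hkj : k = j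
  · subst hkj
    rw [hu0 _ _ him _ (Ne.symm hij) hjm, hu1 _ _ hjm, mul_one, sub_self]
  rw [hu0 _ _ him _ hki hkm, hu0 _ _ hij _ hki hkj, hu0 _ _ hjm _ hkj hkm, mul_zero, sub_zero]

noncomputable def dv (u : Fin n → ℂ) : Derivation ℂ (P2 n) (P2 n) :=
  mkDerivation ℂ fun v => Sum.casesOn v (fun m => (C (u m) : P2 n)) fun _ => 0

theorem Dv_apply (u : Fin n → ℂ) (p : P2 n) : Dv u p = dv u p := rfl

theorem M_apply (q p : P2 n) : M q p = q * p := rfl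

theorem Dv_mul (u : Fin n → ℂ) (p q : P2 n) : Dv u (p * q) = p * Dv u q + q * Dv u p :=
  (dv u).leibniz p q

theorem Dv_C (u : Fin n → ℂ) (c : ℂ) : Dv u (C c) = 0 :=
  (dv u).map_algebraMap c

theorem Dv_lfp (u c : Fin n → ℂ) : Dv u (lfp c) = C (ap u c) := by
  simp only [Dv_apply, lfp, ap, map_sum, Derivation.leibniz, Derivation.map_algebraMap,
    ← algebraMap_eq, dv, mkDerivation_X, smul_eq_mul, mul_zero, add_zero]
  simp [mul_comm]

theorem Dv_sp (u : Fin n → ℂ) (k : Fin (n + 1)) : Dv u (sp k) = 0 :=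
  mkDerivation_X _ _ _

theorem Dv_sub_smul (u v : Fin n → ℂ) (c : ℂ) (p : P2 n) :
    Dv (u - c • v) p = Dv u p - C c * Dv v p := by
  have : dv (u - c • v) = dv u - c • dv v := by
    apply derivation_ext
    rintro (k | k) <;> simp [dv, mkDerivation_X, smul_eq_C_mul]
  simp [Dv_apply, this, smul_eq_C_mul]

theorem Dv_Dv_comm (u v : Fin n → ℂ) (p : P2 n) : Dv u (Dv v p) = Dv v (Dv u p) := by
  have : ⁅dv u, dv v⁆ = 0 := by
    apply derivation_ext
    rintro (k | k) <;> simp [Derivation.commutator_apply, dv, mkDerivation_X]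
  have h := congrArg (· p) this
  simp only [Derivation.commutator_apply, Derivation.zero_apply, sub_eq_zero] at h
  exact h

end

section

variable {n : ℕ} (l : Fin (n + 1) → Fin n → ℂ) (u : Fin (n + 1) → Fin (n + 1) → Fin n → ℂ)

theorem Ut_apply (i j : Fin (n + 1)) (f : P2 n) :
    Ut l u i j f = lfp (l i) * lfp (l j) * Dv (u i j) f - lfp (l j) * sp i * f -
      C (ap (u i j) (l j)) * (lfp (l i) * sp j * f) := by
  simp [Ut, M_apply, smul_eq_C_mul, mul_assoc]

theorem Ut_add_M_mul_M (i j : Fin (n + 1)) :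
    Ut l u i j + M (lfp (l j)) * M (sp i) =
      M (lfp (l i)) * M (lfp (l j)) * Dv (u i j) -
        ap (u i j) (l j) • (M (lfp (l i)) * M (sp j)) := by
  rw [Ut]
  abel

theorem Ut_commutator {i j m : Fin (n + 1)} (hijm : ap (u i j) (l m) = 0)
    (hjmj : ap (u j m) (l j) = 1) (hjmi : ap (u j m) (l i) = 0)
    (hum : u i m = u i j - ap (u i j) (l j) • u j m) :
    Ut l u j m * Ut l u i j - Ut l u i j * Ut l u j m = M (lfp (l j)) * Ut l u i m := by
  refine LinearMap.ext fun f => ?_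
  simp only [Module.End.mul_apply, LinearMap.sub_apply, Ut_apply, M_apply, hum, Dv_sub_smul,
    ap_sub_smul, map_sub, map_mul, Dv_mul, Dv_C, Dv_lfp, Dv_sp, hijm, hjmj, hjmi]
  rw [Dv_Dv_comm (u j m)]
  simp only [map_one, map_zero]
  ring

end

/-- for pairwise distinct `i,j,m`,
`l_m s_j Ũ_{i,j} − l_j s_i Ũ_{j,m} = −(l_i l_j U_{i,j} − U_{i,j}(l_j) l_i s_j) Ũ_{j,m}
 + (l_j l_m U_{j,m} − U_{j,m}(l_m) l_j s_m) Ũ_{i,j} − l_j Ũ_{i,m}`. -/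
theorem stmt14 (n : ℕ) (l : Fin (n + 1) → Fin n → ℂ) (hl : Generic l)
    (u : Fin (n + 1) → Fin (n + 1) → Fin n → ℂ)
    (hu1 : ∀ a b, a ≠ b → ap (u a b) (l a) = 1)
    (hu0 : ∀ a b, a ≠ b → ∀ k, k ≠ a → k ≠ b → ap (u a b) (l k) = 0)
    (i j m : Fin (n + 1)) (hij : i ≠ j) (him : i ≠ m) (hjm : j ≠ m) :
    M (lfp (l m)) * M (sp j) * Ut l u i j - M (lfp (l j)) * M (sp i) * Ut l u j m =
      -((M (lfp (l i)) * M (lfp (l j)) * Dv (u i j) -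
          ap (u i j) (l j) • (M (lfp (l i)) * M (sp j))) * Ut l u j m) +
        (M (lfp (l j)) * M (lfp (l m)) * Dv (u j m) -
          ap (u j m) (l m) • (M (lfp (l j)) * M (sp m))) * Ut l u i j -
          M (lfp (l j)) * Ut l u i m := by
  rw [← Ut_add_M_mul_M, ← Ut_add_M_mul_M, add_mul, add_mul,
    ← Ut_commutator l u (hu0 i j hij m him.symm hjm.symm) (hu1 j m hjm) (hu0 j m hjm i hij him)
      (vectorField_eq_sub_smul hl hu1 hu0 hij him hjm)]
  abel
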